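/- arXiv:math/0204177 — 2 statements merged into one kernel-verified Lean document; each statement's English description precedes it below -/
import Mathlib

section
/- Let a, b, c ∈ K[t] and (p_x, p_y, p_w) a syzygy of (a,b,c) of degree μ, i.e., p_x·a + p_y·b + p_w·c = 0 with max degree μ. Let α be a root of a, write a = (t − α)·a', and set a_ε := (t − α + ε)·a'. Then ((t − α)·p_x, (t − α + ε)·p_y, (t − α + ε)·p_w) is a nonzero syzygy of (a_ε, b, c) in K(ε)[t], of degree μ + 1. In particular μ(a_ε, b, c) ≤ μ(a,b,c) + 1. -/
open Polynomial
open scoped Classical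

/-- The syzygy set of a triple of polynomials. -/
def Syz {K : Type*} [Field K] (a b c : K[X]) : Set (K[X] × K[X] × K[X]) :=
  {p | p.1 * a + p.2.1 * b + p.2.2 * c = 0}

/-- The degree of a triple of polynomials: the max of the (nat) degrees. -/
def triDeg {K : Type*} [Field K] (p : K[X] × K[X] × K[X]) : ℕ :=
  max p.1.natDegree (max p.2.1.natDegree p.2.2.natDegree)

/-- The class `μ(a,b,c)`: minimal degree of a nonzero syzygy. -/
noncomputable def mu {K : Type*} [Field K] (a b c : K[X]) : ℕ :=
  sInf (Set.image triDeg {p ∈ Syz a b c | p ≠ 0})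

theorem stmt6 {K : Type*} [Field K] (a b c a' px py pw : K[X]) (α : K) (μ : ℕ)
    (hsyz : (px, py, pw) ∈ Syz a b c)
    (hp0 : (px, py, pw) ≠ 0)
    (hdeg : triDeg (px, py, pw) = μ)
    (hmu : mu a b c = μ)
    (hroot : a.eval α = 0)
    (ha : a = (X - C α) * a') :
    ((X - C (algebraMap K (RatFunc K) α)) * (px.map (algebraMap K (RatFunc K))),
      (X - C (algebraMap K (RatFunc K) α) + C RatFunc.X) * (py.map (algebraMap K (RatFunc K))),
      (X - C (algebraMap K (RatFunc K) α) + C RatFunc.X) * (pw.map (algebraMap K (RatFunc K))))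
      ∈ Syz ((X - C (algebraMap K (RatFunc K) α) + C RatFunc.X) *
              (a'.map (algebraMap K (RatFunc K))))
          (b.map (algebraMap K (RatFunc K))) (c.map (algebraMap K (RatFunc K))) ∧
    ((X - C (algebraMap K (RatFunc K) α)) * (px.map (algebraMap K (RatFunc K))),
      (X - C (algebraMap K (RatFunc K) α) + C RatFunc.X) * (py.map (algebraMap K (RatFunc K))),
      (X - C (algebraMap K (RatFunc K) α) + C RatFunc.X) * (pw.map (algebraMap K (RatFunc K)))) ≠ 0 ∧
    triDeg ((X - C (algebraMap K (RatFunc K) α)) * (px.map (algebraMap K (RatFunc K))),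
      (X - C (algebraMap K (RatFunc K) α) + C RatFunc.X) * (py.map (algebraMap K (RatFunc K))),
      (X - C (algebraMap K (RatFunc K) α) + C RatFunc.X) * (pw.map (algebraMap K (RatFunc K)))) = μ + 1 ∧
    mu ((X - C (algebraMap K (RatFunc K) α) + C RatFunc.X) * (a'.map (algebraMap K (RatFunc K))))
      (b.map (algebraMap K (RatFunc K))) (c.map (algebraMap K (RatFunc K))) ≤ mu a b c + 1 := by
  classical
  set f : K →+* RatFunc K := algebraMap K (RatFunc K) with hf
  set L : (RatFunc K)[X] := X - C (f α) with hLdef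
  set Lε : (RatFunc K)[X] := X - C (f α) + C RatFunc.X with hLεdef
  have hLmon : L.Monic := monic_X_sub_C _
  have hLεeq : Lε = X + C (RatFunc.X - f α) := by
    rw [hLεdef, map_sub]; ring
  have hLεmon : Lε.Monic := by rw [hLεeq]; exact monic_X_add_C _
  have hL0 : L ≠ 0 := hLmon.ne_zero
  have hLε0 : Lε ≠ 0 := hLεmon.ne_zero
  have hLd : L.natDegree = 1 := natDegree_X_sub_C _
  have hLεd : Lε.natDegree = 1 := by rw [hLεeq]; exact natDegree_X_add_C (RatFunc.X - f α)
  have hfin : Function.Injective f := f.injective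
  have hmap0 : ∀ p : K[X], p.map f = 0 ↔ p = 0 := fun p =>
    Polynomial.map_eq_zero_iff hfin
  have hmapd : ∀ p : K[X], (p.map f).natDegree = p.natDegree := fun p =>
    natDegree_map_eq_of_injective hfin p
  have hsyz' : px * a + py * b + pw * c = 0 := hsyz
  have h2 : px.map f * a.map f + py.map f * b.map f + pw.map f * c.map f = 0 := by
    have := congrArg (Polynomial.map f) hsyz'
    simpa using this
  have haf : a.map f = L * a'.map f := by
    rw [ha]; simp [hLdef]
  have h3 : px.map f * (L * a'.map f) + py.map f * b.map f + pw.map f * c.map f = 0 := by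
    rw [← haf]; exact h2
  have Hsyz : L * px.map f * (Lε * a'.map f) + Lε * (py.map f) * b.map f
      + Lε * (pw.map f) * c.map f = 0 := by
    linear_combination Lε * h3
  have Hne : (L * px.map f, Lε * py.map f, Lε * pw.map f)
      ≠ (0 : (RatFunc K)[X] × (RatFunc K)[X] × (RatFunc K)[X]) := by
    intro h
    rw [Prod.mk.injEq, Prod.mk.injEq] at h
    obtain ⟨h1, hy, hz⟩ := h
    have hx0 : px = 0 := by
      rcases mul_eq_zero.mp h1 with h | h
      · exact absurd h hL0
      · exact (hmap0 px).mp h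
    have hy0 : py = 0 := by
      rcases mul_eq_zero.mp hy with h | h
      · exact absurd h hLε0
      · exact (hmap0 py).mp h
    have hz0 : pw = 0 := by
      rcases mul_eq_zero.mp hz with h | h
      · exact absurd h hLε0
      · exact (hmap0 pw).mp h
    exact hp0 (by simp [hx0, hy0, hz0, Prod.ext_iff])
  have Hdeg : max (L * px.map f).natDegree
      (max (Lε * py.map f).natDegree (Lε * pw.map f).natDegree) = μ + 1 := by
    have hnd : ∀ (M : (RatFunc K)[X]) (p : K[X]), M ≠ 0 → M.natDegree = 1 →
        (M * p.map f).natDegree = if p = 0 then 0 else p.natDegree + 1 := by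
      intro M p hM hMd
      by_cases hp : p = 0
      · simp [hp]
      · rw [if_neg hp, natDegree_mul hM ((hmap0 p).not.mpr hp), hMd, hmapd]
        ring
    have hdeg' : max px.natDegree (max py.natDegree pw.natDegree) = μ := hdeg
    have hne : ¬ (px = 0 ∧ py = 0 ∧ pw = 0) := by
      rintro ⟨e1, e2, e3⟩
      exact hp0 (by simp [e1, e2, e3, Prod.ext_iff])
    rw [hnd L px hL0 hLd, hnd Lε py hLε0 hLεd, hnd Lε pw hLε0 hLεd]
    by_cases e1 : px = 0 <;> by_cases e2 : py = 0 <;> by_cases e3 : pw = 0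
    · exact absurd ⟨e1, e2, e3⟩ hne
    all_goals
      simp only [e1, e2, e3, natDegree_zero, ite_true, ite_false, if_true, if_false,
        eq_self_iff_true, not_false_eq_true] at hdeg' ⊢
    all_goals omega
  refine ⟨Hsyz, Hne, Hdeg, ?_⟩
  rw [hmu]
  have : μ + 1 ∈ Set.image triDeg
      {p ∈ Syz (Lε * a'.map f) (b.map f) (c.map f) | p ≠ 0} :=
    ⟨(L * px.map f, Lε * py.map f, Lε * pw.map f), ⟨Hsyz, Hne⟩, Hdeg⟩
  exact Nat.sInf_le this
end

section
/- Let a, b, c ∈ K[t] with gcd(a,b,c) = 1, not all constant, n = max(deg a, deg b, deg c). Then μ(a,b,c) ≤ ⌊n/2⌋: there exists a nonzero syzygy of (a,b,c) of degree at most ⌊n/2⌋. -/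
/-!
A dimension count. With `n = triDeg (a, b, c)` and `m = ⌊n/2⌋`, the `K`-linear map
`(A, B, C) ↦ A a + B b + C c` sends the triples of degree at most `m`, a space of dimension
`3 (m + 1)`, into the polynomials of degree at most `n + m`, a space of dimension `n + m + 1`.
Since `n ≤ 2 m + 1`, the source is larger, so the map has a nonzero kernel element.
-/

open Polynomial
open scoped Classical

open Module

namespace Polynomial

variable {K : Type*} [Field K]

theorem mem_degreeLE_iff_natDegree_le {p : K[X]} {n : ℕ} :
    p ∈ degreeLE K n ↔ p.natDegree ≤ n := by
  rw [mem_degreeLE, natDegree_le_iff_degree_le]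

instance finiteDimensional_degreeLE (n : ℕ) : FiniteDimensional K (degreeLE K n) := by
  rw [← degreeLT_succ_eq_degreeLE]
  exact .equiv (degreeLTEquiv K (n + 1)).symm

theorem finrank_degreeLE (n : ℕ) : finrank K (degreeLE K n) = n + 1 := by
  rw [← degreeLT_succ_eq_degreeLE, (degreeLTEquiv K (n + 1)).finrank_eq, finrank_fin_fun]

theorem mul_mem_degreeLE {p q : K[X]} {m n : ℕ} (hp : p ∈ degreeLE K m)
    (hq : q.natDegree ≤ n) : p * q ∈ degreeLE K ↑(m + n) := by
  rw [mem_degreeLE_iff_natDegree_le] at hp ⊢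
  exact natDegree_mul_le.trans (add_le_add hp hq)

end Polynomial

section Syzygy

variable {K : Type*} [Field K]

theorem triDeg_le_iff {p : K[X] × K[X] × K[X]} {m : ℕ} :
    triDeg p ≤ m ↔ p.1.natDegree ≤ m ∧ p.2.1.natDegree ≤ m ∧ p.2.2.natDegree ≤ m := by
  simp only [triDeg, max_le_iff]

noncomputable def syzygyMap (a b c : K[X]) : K[X] × K[X] × K[X] →ₗ[K] K[X] :=
  (LinearMap.mulRight K a).coprod ((LinearMap.mulRight K b).coprod (LinearMap.mulRight K c))

theorem syzygyMap_eq_zero_iff {a b c : K[X]} {p : K[X] × K[X] × K[X]} :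
    syzygyMap a b c p = 0 ↔ p ∈ Syz a b c := by
  simp [syzygyMap, Syz, add_assoc]

theorem syzygyMap_mem_degreeLE {a b c : K[X]} {p : K[X] × K[X] × K[X]} {m : ℕ}
    (hp : triDeg p ≤ m) : syzygyMap a b c p ∈ degreeLE K ↑(m + triDeg (a, b, c)) := by
  obtain ⟨hA, hB, hC⟩ := triDeg_le_iff.1 hp
  obtain ⟨ha, hb, hc⟩ := triDeg_le_iff.1 (le_refl (triDeg (a, b, c)))
  rw [← mem_degreeLE_iff_natDegree_le] at hA hB hC
  simp only [syzygyMap, LinearMap.coprod_apply, LinearMap.mulRight_apply]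
  exact add_mem (mul_mem_degreeLE hA ha)
    (add_mem (mul_mem_degreeLE hB hb) (mul_mem_degreeLE hC hc))

theorem mu_le_triDeg {a b c : K[X]} {p : K[X] × K[X] × K[X]} (hp : p ∈ Syz a b c)
    (hp0 : p ≠ 0) : mu a b c ≤ triDeg p :=
  Nat.sInf_le ⟨p, ⟨hp, hp0⟩, rfl⟩

theorem exists_syzygy_triDeg_le {a b c : K[X]} {m : ℕ} (h : triDeg (a, b, c) ≤ 2 * m + 1) :
    ∃ p ∈ Syz a b c, p ≠ 0 ∧ triDeg p ≤ m := by
  set V : Submodule K K[X] := degreeLE K m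
  let incl : V × V × V →ₗ[K] K[X] × K[X] × K[X] :=
    V.subtype.prodMap (V.subtype.prodMap V.subtype)
  have hincl : ∀ x, triDeg (incl x) ≤ m := fun x ↦
    triDeg_le_iff.2 ⟨mem_degreeLE_iff_natDegree_le.1 x.1.2,
      mem_degreeLE_iff_natDegree_le.1 x.2.1.2, mem_degreeLE_iff_natDegree_le.1 x.2.2.2⟩
  let f : V × V × V →ₗ[K] degreeLE K ↑(m + triDeg (a, b, c)) :=
    ((syzygyMap a b c).comp incl).codRestrict _ fun x ↦ syzygyMap_mem_degreeLE (hincl x)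
  have hdim : finrank K (degreeLE K ↑(m + triDeg (a, b, c))) < finrank K (V × V × V) := by
    simp only [V, finrank_prod, finrank_degreeLE]
    omega
  obtain ⟨x, hx, hx0⟩ :=
    Submodule.exists_mem_ne_zero_of_ne_bot (LinearMap.ker_ne_bot_of_finrank_lt hdim)
  refine ⟨incl x, syzygyMap_eq_zero_iff.1 ?_, ?_, hincl x⟩
  · exact congrArg Subtype.val (LinearMap.mem_ker.1 hx : f x = 0)
  · simpa [incl, Prod.ext_iff] using hx0

end Syzygy

theorem stmt18_general {K : Type*} [Field K] (a b c : K[X]) :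
    mu a b c ≤ triDeg (a, b, c) / 2 ∧
    ∃ p ∈ Syz a b c, p ≠ 0 ∧ triDeg p ≤ triDeg (a, b, c) / 2 := by
  obtain ⟨p, hp, hp0, hdeg⟩ :=
    exists_syzygy_triDeg_le (show triDeg (a, b, c) ≤ 2 * (triDeg (a, b, c) / 2) + 1 by omega)
  exact ⟨(mu_le_triDeg hp hp0).trans hdeg, p, hp, hp0, hdeg⟩

theorem stmt18 {K : Type*} [Field K] (a b c : K[X])
    (hgcd : gcd a (gcd b c) = 1)
    (hnc : ¬(a.natDegree = 0 ∧ b.natDegree = 0 ∧ c.natDegree = 0)) :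
    mu a b c ≤ triDeg (a, b, c) / 2 ∧
    ∃ p ∈ Syz a b c, p ≠ 0 ∧ triDeg p ≤ triDeg (a, b, c) / 2 :=
  stmt18_general a b c
end
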